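/- Let X_1, …, X_n be i.i.d. random points in R^d with common distribution P, let T ⊂ R^d, and suppose there is C > 0 with P(B(t, r)) ≥ C ω_d r^d for all t ∈ T and all sufficiently small r > 0. If {ε_n} satisfies ε_n → 0 and n ε_n^d / log n → ∞, and if T admits minimal coverings by balls of radius ε/2 of cardinality at most A ε^{1−d}, then P(∃ t ∈ T : no sample point lies in B(t, ε_n)) ≤ A' ε_n^{1−d} exp(−K n ε_n^d) for constants A', K > 0, and these probabilities are summable in n. -/

import Mathlib

open Metric Set MeasureTheory Filter
open scoped ENNReal

/-!
Cover `T` by the balls `B(c, ε/2)`, `c ∈ s`, of a minimal covering. If some `t ∈ T` is at distance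
more than `ε` from every sample point, then the covering ball containing `t` holds no sample point.
Each such ball has mass at least `p = C ω_d (ε/2)^d`, so it is empty with probability
`(1 - p)^n ≤ exp (-n p)`, and a union bound over the `A ε^{1-d}` balls gives the estimate with
`K = C ω_d / 2^d`. Since `n ε_n^d ≥ (3/K) log n` eventually, `exp (-K n ε_n^d) ≤ n⁻³`, while
`ε_n^{1-d} ≤ n` as soon as `n ε_n^d ≥ 1`; the bounds are therefore `O(n⁻²)`, hence summable.
-/

theorem measure_pi_univ_pi_compl_le_exp {Ω : Type*} [MeasurableSpace Ω] (μ : Measure Ω)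
    [IsProbabilityMeasure μ] {s : Set Ω} (hs : MeasurableSet s) {p : ℝ}
    (hp : ENNReal.ofReal p ≤ μ s) (n : ℕ) :
    Measure.pi (fun _ : Fin n => μ) (univ.pi fun _ => sᶜ) ≤ ENNReal.ofReal (Real.exp (-(n * p))) := by
  have hcompl : μ sᶜ ≤ ENNReal.ofReal (Real.exp (-p)) := by
    rw [prob_compl_eq_one_sub hs]
    calc 1 - μ s ≤ 1 - ENNReal.ofReal p := tsub_le_tsub_left hp 1
      _ ≤ ENNReal.ofReal (1 - p) := by
        rw [tsub_le_iff_right, ← ENNReal.ofReal_one]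
        simpa using ENNReal.ofReal_add_le (p := 1 - p) (q := p)
      _ ≤ ENNReal.ofReal (Real.exp (-p)) := by
        gcongr; linarith [Real.add_one_le_exp (-p)]
  calc Measure.pi (fun _ : Fin n => μ) (univ.pi fun _ => sᶜ) = μ sᶜ ^ n := by
        simp [Measure.pi_pi]
    _ ≤ ENNReal.ofReal (Real.exp (-p)) ^ n := by gcongr
    _ = ENNReal.ofReal (Real.exp (-(n * p))) := by
        rw [← ENNReal.ofReal_pow (Real.exp_nonneg _), ← Real.exp_nat_mul, mul_neg]

theorem setOf_exists_forall_lt_dist_subset {X ι : Type*} [PseudoMetricSpace X] {T : Set X}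
    {s : Finset X} {e : ℝ} (hcover : T ⊆ ⋃ c ∈ s, closedBall c (e / 2)) :
    {x : ι → X | ∃ t ∈ T, ∀ i, e < dist (x i) t} ⊆
      ⋃ c ∈ s, univ.pi fun _ => (closedBall c (e / 2))ᶜ := by
  rintro x ⟨t, htT, hfar⟩
  obtain ⟨c, hc, htc⟩ := mem_iUnion₂.1 (hcover htT)
  refine mem_iUnion₂.2 ⟨c, hc, fun i _ hxc => ?_⟩
  have := dist_triangle_right (x i) t c
  linarith [hfar i, mem_closedBall.1 hxc, mem_closedBall.1 htc]

theorem measure_exists_forall_lt_dist_le {X : Type*} [PseudoMetricSpace X] [MeasurableSpace X]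
    [OpensMeasurableSpace X] (μ : Measure X) [IsProbabilityMeasure μ] {T : Set X}
    {s : Finset X} {e p N : ℝ} (hcover : T ⊆ ⋃ c ∈ s, closedBall c (e / 2))
    (hcard : (s.card : ℝ) ≤ N) (hmass : ∀ c ∈ s, ENNReal.ofReal p ≤ μ (closedBall c (e / 2)))
    (n : ℕ) :
    Measure.pi (fun _ : Fin n => μ) {x | ∃ t ∈ T, ∀ i, e < dist (x i) t} ≤
      ENNReal.ofReal (N * Real.exp (-(n * p))) := by
  calc Measure.pi (fun _ : Fin n => μ) {x | ∃ t ∈ T, ∀ i, e < dist (x i) t}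
      ≤ ∑ c ∈ s, Measure.pi (fun _ : Fin n => μ) (univ.pi fun _ => (closedBall c (e / 2))ᶜ) :=
        (measure_mono (setOf_exists_forall_lt_dist_subset hcover)).trans
          (measure_biUnion_finset_le _ _)
    _ ≤ ∑ _c ∈ s, ENNReal.ofReal (Real.exp (-(n * p))) := Finset.sum_le_sum fun c hc =>
        measure_pi_univ_pi_compl_le_exp μ measurableSet_closedBall (hmass c hc) n
    _ ≤ ENNReal.ofReal (N * Real.exp (-(n * p))) := by
        rw [Finset.sum_const, nsmul_eq_mul, ← ENNReal.ofReal_natCast,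
          ← ENNReal.ofReal_mul (Nat.cast_nonneg _)]
        gcongr

theorem eventually_mul_log_le_of_tendsto_div_log {f : ℕ → ℝ}
    (hf : Tendsto (fun n => f n / Real.log n) atTop atTop) (c : ℝ) :
    ∀ᶠ n : ℕ in atTop, c * Real.log n ≤ f n := by
  filter_upwards [hf.eventually_ge_atTop c, eventually_ge_atTop 2] with n hc hn
  have hlog : 0 < Real.log n := Real.log_pos (by exact_mod_cast hn)
  exact (le_div_iff₀ hlog).1 hc

theorem exp_neg_le_inv_pow_of_mul_log_le {n : ℕ} (hn : 0 < n) {k : ℕ} {y : ℝ}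
    (hy : k * Real.log n ≤ y) : Real.exp (-y) ≤ ((n : ℝ) ^ k)⁻¹ := by
  calc Real.exp (-y) ≤ Real.exp (-(k * Real.log n)) := Real.exp_le_exp.2 (neg_le_neg hy)
    _ = ((n : ℝ) ^ k)⁻¹ := by
        rw [Real.exp_neg, Real.exp_nat_mul, Real.exp_log (by exact_mod_cast hn)]

theorem zpow_one_sub_le_of_one_le_mul_pow {e x : ℝ} (he : 0 < e) (he1 : e ≤ 1) {d : ℕ}
    (hx : 1 ≤ x * e ^ d) : e ^ ((1 : ℤ) - d) ≤ x := by
  rw [zpow_sub₀ he.ne', zpow_one, zpow_natCast, div_le_iff₀ (pow_pos he d)]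
  linarith

theorem summable_zpow_one_sub_mul_exp {d : ℕ} {K : ℝ} (hK : 0 < K) {ε : ℕ → ℝ}
    (hεpos : ∀ n, 0 < ε n) (hε0 : Tendsto ε atTop (nhds 0))
    (hεn : Tendsto (fun n => n * ε n ^ d / Real.log n) atTop atTop) :
    Summable fun n => ε n ^ ((1 : ℤ) - d) * Real.exp (-K * n * ε n ^ d) := by
  refine (Real.summable_nat_pow_inv.2 one_lt_two).of_norm_bounded_eventually_nat ?_
  filter_upwards [eventually_mul_log_le_of_tendsto_div_log hεn 1,
    eventually_mul_log_le_of_tendsto_div_log hεn (3 / K), hε0.eventually_le_const one_pos,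
    eventually_ge_atTop 3] with n hone hthree hε1 hn
  have hlog : 1 ≤ Real.log n := by
    rw [Real.le_log_iff_exp_le (by positivity)]
    linarith [Real.exp_one_lt_d9, (show (3 : ℝ) ≤ n by exact_mod_cast hn)]
  have hzpow : ε n ^ ((1 : ℤ) - d) ≤ n :=
    zpow_one_sub_le_of_one_le_mul_pow (hεpos n) hε1 (by linarith)
  have hexp : Real.exp (-K * n * ε n ^ d) ≤ ((n : ℝ) ^ 3)⁻¹ := by
    rw [mul_assoc, neg_mul]
    refine exp_neg_le_inv_pow_of_mul_log_le (by omega) ?_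
    rw [div_mul_eq_mul_div, div_le_iff₀ hK] at hthree
    push_cast; linarith
  rw [Real.norm_of_nonneg (mul_nonneg (zpow_nonneg (hεpos n).le _) (Real.exp_nonneg _))]
  calc ε n ^ ((1 : ℤ) - d) * Real.exp (-K * n * ε n ^ d) ≤ n * ((n : ℝ) ^ 3)⁻¹ := by
        gcongr
    _ = ((n : ℝ) ^ 2)⁻¹ := by
        have : (n : ℝ) ≠ 0 := Nat.cast_ne_zero.2 (by omega)
        field_simp

theorem empty_ball_probability_bound_general (d : ℕ)
    (P : Measure (EuclideanSpace ℝ (Fin d))) [IsProbabilityMeasure P]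
    (T : Set (EuclideanSpace ℝ (Fin d)))
    (C r0 : ℝ) (hC : 0 < C) (hr0 : 0 < r0)
    (hstd : ∀ t ∈ T, ∀ r : ℝ, 0 < r → r < r0 →
      ENNReal.ofReal (C * r ^ d) * volume (closedBall (0 : EuclideanSpace ℝ (Fin d)) 1)
        ≤ P (closedBall t r))
    (ε : ℕ → ℝ) (hεpos : ∀ n, 0 < ε n)
    (hε0 : Tendsto ε atTop (nhds 0))
    (hεn : Tendsto (fun n => n * ε n ^ d / Real.log n) atTop atTop)
    (A ε1 : ℝ) (hA : 0 < A) (hε1 : 0 < ε1)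
    (hcover : ∀ e : ℝ, 0 < e → e < ε1 →
      ∃ s : Finset (EuclideanSpace ℝ (Fin d)), ↑s ⊆ T ∧
        (s.card : ℝ) ≤ A * e ^ ((1 : ℤ) - d) ∧ T ⊆ ⋃ x ∈ s, closedBall x (e / 2)) :
    ∃ A' K : ℝ, 0 < A' ∧ 0 < K ∧
      (∀ᶠ n in atTop,
        (Measure.pi fun _ : Fin n => P) {x | ∃ t ∈ T, ∀ i, ε n < dist (x i) t}
          ≤ ENNReal.ofReal (A' * ε n ^ ((1 : ℤ) - d) * Real.exp (-K * n * ε n ^ d))) ∧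
      Summable (fun n =>
        ((Measure.pi fun _ : Fin n => P) {x | ∃ t ∈ T, ∀ i, ε n < dist (x i) t}).toReal) := by
  obtain ⟨ω, hvol, hω⟩ : ∃ ω : ℝ,
      volume (closedBall (0 : EuclideanSpace ℝ (Fin d)) 1) = ENNReal.ofReal ω ∧ 0 < ω :=
    ⟨_, (ENNReal.ofReal_toReal measure_closedBall_lt_top.ne).symm,
      ENNReal.toReal_pos (measure_closedBall_pos _ _ one_pos).ne' measure_closedBall_lt_top.ne⟩
  set K := C * ω / 2 ^ d with hK_def
  have hK : 0 < K := by positivity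
  have hmass : ∀ t ∈ T, ∀ e, 0 < e → e < r0 →
      ENNReal.ofReal (K * e ^ d) ≤ P (closedBall t (e / 2)) := fun t ht e he her => by
    convert hstd t ht (e / 2) (by positivity) (by linarith) using 1
    rw [hvol, ← ENNReal.ofReal_mul (by positivity), hK_def, div_pow]
    congr 1
    ring
  have hbound : ∀ᶠ n in atTop, (Measure.pi fun _ : Fin n => P)
      {x | ∃ t ∈ T, ∀ i, ε n < dist (x i) t}
        ≤ ENNReal.ofReal (A * ε n ^ ((1 : ℤ) - d) * Real.exp (-K * n * ε n ^ d)) := by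
    filter_upwards [hε0.eventually_lt_const hε1, hε0.eventually_lt_const hr0] with n hn1 hnr
    obtain ⟨s, hsT, hcard, hTs⟩ := hcover (ε n) (hεpos n) hn1
    convert measure_exists_forall_lt_dist_le P hTs hcard
      (fun c hc => hmass c (hsT hc) (ε n) (hεpos n) hnr) n using 4
    ring
  refine ⟨A, K, hA, hK, hbound, ?_⟩
  refine ((summable_zpow_one_sub_mul_exp hK hεpos hε0 hεn).mul_left A)
    |>.of_norm_bounded_eventually_nat ?_
  filter_upwards [hbound] with n hn
  rw [Real.norm_of_nonneg ENNReal.toReal_nonneg, ← mul_assoc]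
  have hε_nonneg := (hεpos n).le
  exact ENNReal.toReal_le_of_le_ofReal (by positivity) hn

/-- under standardness of `P` on `T`, a covering bound for `T`, and
`ε_n → 0`, `n ε_n^d / log n → ∞`, the probability that some point of `T` has no
sample point within `ε_n` is at most `A' ε_n^{1-d} exp(-K n ε_n^d)`, and these
probabilities are summable. -/
theorem empty_ball_probability_bound (d : ℕ) (hd : 0 < d)
    (P : Measure (EuclideanSpace ℝ (Fin d))) [IsProbabilityMeasure P]
    (T : Set (EuclideanSpace ℝ (Fin d)))
    (C r0 : ℝ) (hC : 0 < C) (hr0 : 0 < r0)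
    (hstd : ∀ t ∈ T, ∀ r : ℝ, 0 < r → r < r0 →
      ENNReal.ofReal (C * r ^ d) * volume (closedBall (0 : EuclideanSpace ℝ (Fin d)) 1)
        ≤ P (closedBall t r))
    (ε : ℕ → ℝ) (hεpos : ∀ n, 0 < ε n)
    (hε0 : Tendsto ε atTop (nhds 0))
    (hεn : Tendsto (fun n => n * ε n ^ d / Real.log n) atTop atTop)
    (A ε1 : ℝ) (hA : 0 < A) (hε1 : 0 < ε1)
    (hcover : ∀ e : ℝ, 0 < e → e < ε1 →
      ∃ s : Finset (EuclideanSpace ℝ (Fin d)), ↑s ⊆ T ∧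
        (s.card : ℝ) ≤ A * e ^ ((1 : ℤ) - d) ∧ T ⊆ ⋃ x ∈ s, closedBall x (e / 2)) :
    ∃ A' K : ℝ, 0 < A' ∧ 0 < K ∧
      (∀ᶠ n in atTop,
        (Measure.pi fun _ : Fin n => P) {x | ∃ t ∈ T, ∀ i, ε n < dist (x i) t}
          ≤ ENNReal.ofReal (A' * ε n ^ ((1 : ℤ) - d) * Real.exp (-K * n * ε n ^ d))) ∧
      Summable (fun n =>
        ((Measure.pi fun _ : Fin n => P) {x | ∃ t ∈ T, ∀ i, ε n < dist (x i) t}).toReal) :=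
  empty_ball_probability_bound_general d P T C r0 hC hr0 hstd ε hεpos hε0 hεn A ε1 hA hε1 hcover
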